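/- Abstraction soundness for unbounded reachability: let (S, P) be a finite DTMC, h : S → Ŝ a surjective abstraction function, and B ⊆ S an h-saturated target set with abstract target B̂ = h(B). Then for every s ∈ S, ⨆ₙ minreach n (h s) ≤ Preach s ≤ ⨆ₙ maxreach n (h s), where Preach is the reachability probability of B in the concrete DTMC and minreach, maxreach are the value-iteration sequences of the induced abstract MDP with target B̂. -/

import Mathlib

open scoped Classical

/-- Concretization of an abstract state: `γ(t) = h⁻¹({t})`, as a finset. -/
noncomputable def gammaSet {S T : Type*} [Fintype S] (h : S → T) (t : T) : Finset S :=
  Finset.univ.filter fun s => h s = t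

/-- The concretization of every abstract state is nonempty when `h` is surjective. -/
theorem gammaSet_nonempty {S T : Type*} [Fintype S] (h : S → T)
    (hsurj : Function.Surjective h) (t : T) : (gammaSet h t).Nonempty := by
  obtain ⟨s, hs⟩ := hsurj t
  exact ⟨s, by simp [gammaSet, hs]⟩

/-- Abstract transition function of the induced abstract MDP:
`P̂ ŝ α ŝ' = ∑_{s' ∈ γ(ŝ')} P α s'` (independent of the abstract source state). -/
noncomputable def absP {S T : Type*} [Fintype S] (P : S → S → ℝ) (h : S → T)
    (α : S) (t' : T) : ℝ :=
  ∑ s' ∈ gammaSet h t', P α s'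

/-- Minimum value iteration of the induced abstract MDP (state space `T`, actions
`S`, enabled actions `Act(t) = γ(t)`) for an abstract target set `Bh`. -/
noncomputable def absMinReach {S T : Type*} [Fintype S] [Fintype T]
    (P : S → S → ℝ) (h : S → T) (hsurj : Function.Surjective h) (Bh : Set T) :
    ℕ → T → ℝ
  | 0, t => if t ∈ Bh then 1 else 0
  | n + 1, t =>
      if t ∈ Bh then 1
      else (gammaSet h t).inf' (gammaSet_nonempty h hsurj t) fun α =>
        ∑ t' : T, absP P h α t' * absMinReach P h hsurj Bh n t'

/-- Maximum value iteration of the induced abstract MDP for target `Bh`. -/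
noncomputable def absMaxReach {S T : Type*} [Fintype S] [Fintype T]
    (P : S → S → ℝ) (h : S → T) (hsurj : Function.Surjective h) (Bh : Set T) :
    ℕ → T → ℝ
  | 0, t => if t ∈ Bh then 1 else 0
  | n + 1, t =>
      if t ∈ Bh then 1
      else (gammaSet h t).sup' (gammaSet_nonempty h hsurj t) fun α =>
        ∑ t' : T, absP P h α t' * absMaxReach P h hsurj Bh n t'

/-- n-step reachability values of a target set `B` in the concrete DTMC. -/
noncomputable def reachN {S : Type*} [Fintype S] (P : S → S → ℝ) (B : Set S) :
    ℕ → S → ℝ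
  | 0, s => if s ∈ B then 1 else 0
  | n + 1, s => if s ∈ B then 1 else ∑ s' : S, P s s' * reachN P B n s'

/-!
The abstract state `h s` has the concrete state `s` itself among its enabled actions, and
playing it moves to `h s'` with the concrete probability `P s s'`. Since `B` is saturated,
`s ∈ B ↔ h s ∈ h(B)`, so by induction on `n` the `n`-step concrete value at `s` lies between
the abstract minimal and maximal `n`-step values at `h s`. The concrete and the maximal
sequences are bounded by `1`, so the inequalities pass to the suprema.
-/

theorem mem_gammaSet_self {S T : Type*} [Fintype S] (h : S → T) (s : S) :
    s ∈ gammaSet h (h s) := by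
  simp [gammaSet]

theorem sum_absP_mul {S T : Type*} [Fintype S] [Fintype T] (P : S → S → ℝ) (h : S → T)
    (α : S) (g : T → ℝ) :
    ∑ t' : T, absP P h α t' * g t' = ∑ s' : S, P α s' * g (h s') := by
  have fiber (t' : T) : absP P h α t' * g t' = ∑ s' ∈ gammaSet h t', P α s' * g (h s') := by
    rw [absP, Finset.sum_mul]
    refine Finset.sum_congr rfl fun s' hs' => ?_
    rw [(Finset.mem_filter.mp hs').2]
  simp_rw [fiber]
  exact Finset.sum_fiberwise _ _ _

theorem sum_mul_le_one_of_le_one {S : Type*} [Fintype S] {p f : S → ℝ} (hp : ∀ s, 0 ≤ p s)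
    (hsum : ∑ s, p s = 1) (hf : ∀ s, f s ≤ 1) : ∑ s, p s * f s ≤ 1 :=
  calc ∑ s, p s * f s ≤ ∑ s, p s * 1 :=
        Finset.sum_le_sum fun s _ => mul_le_mul_of_nonneg_left (hf s) (hp s)
    _ = 1 := by simp [hsum]

section Bounds

variable {S : Type*} [Fintype S] {P : S → S → ℝ}

theorem reachN_le_one (hP : ∀ s s', 0 ≤ P s s') (hsum : ∀ s, ∑ s', P s s' = 1) (B : Set S) :
    ∀ n s, reachN P B n s ≤ 1
  | 0, s => by unfold reachN; split_ifs <;> norm_num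
  | n + 1, s => by
    unfold reachN
    split_ifs
    · exact le_rfl
    · exact sum_mul_le_one_of_le_one (hP s) (hsum s) (reachN_le_one hP hsum B n)

theorem absMaxReach_le_one {T : Type*} [Fintype T] (hP : ∀ s s', 0 ≤ P s s')
    (hsum : ∀ s, ∑ s', P s s' = 1) (h : S → T) (hsurj : Function.Surjective h) (Bh : Set T) :
    ∀ n t, absMaxReach P h hsurj Bh n t ≤ 1
  | 0, t => by unfold absMaxReach; split_ifs <;> norm_num
  | n + 1, t => by
    unfold absMaxReach
    split_ifs
    · exact le_rfl
    · refine Finset.sup'_le _ _ fun α _ => ?_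
      rw [sum_absP_mul]
      exact sum_mul_le_one_of_le_one (hP α) (hsum α)
        fun s' => absMaxReach_le_one hP hsum h hsurj Bh n (h s')

end Bounds

section Saturated

variable {S T : Type*} [Fintype S] [Fintype T] {P : S → S → ℝ} {h : S → T}
  {hsurj : Function.Surjective h} {B : Set S}

theorem absMinReach_le_reachN (hP : ∀ s s', 0 ≤ P s s') (hsat : B = h ⁻¹' (h '' B)) :
    ∀ n s, absMinReach P h hsurj (h '' B) n (h s) ≤ reachN P B n s
  | 0, s => by
    simp only [absMinReach, reachN, ← Set.mem_preimage, ← hsat, le_rfl]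
  | n + 1, s => by
    simp only [absMinReach, reachN, ← Set.mem_preimage, ← hsat]
    split_ifs
    · exact le_rfl
    · calc _ ≤ ∑ t', absP P h s t' * absMinReach P h hsurj (h '' B) n t' :=
            Finset.inf'_le _ (mem_gammaSet_self h s)
        _ = ∑ s', P s s' * absMinReach P h hsurj (h '' B) n (h s') := sum_absP_mul P h s _
        _ ≤ ∑ s', P s s' * reachN P B n s' := Finset.sum_le_sum fun s' _ =>
            mul_le_mul_of_nonneg_left (absMinReach_le_reachN hP hsat n s') (hP s s')

theorem reachN_le_absMaxReach (hP : ∀ s s', 0 ≤ P s s') (hsat : B = h ⁻¹' (h '' B)) :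
    ∀ n s, reachN P B n s ≤ absMaxReach P h hsurj (h '' B) n (h s)
  | 0, s => by
    simp only [absMaxReach, reachN, ← Set.mem_preimage, ← hsat, le_rfl]
  | n + 1, s => by
    simp only [absMaxReach, reachN, ← Set.mem_preimage, ← hsat]
    split_ifs
    · exact le_rfl
    · calc ∑ s', P s s' * reachN P B n s'
          ≤ ∑ s', P s s' * absMaxReach P h hsurj (h '' B) n (h s') := Finset.sum_le_sum
            fun s' _ => mul_le_mul_of_nonneg_left (reachN_le_absMaxReach hP hsat n s') (hP s s')
        _ = ∑ t', absP P h s t' * absMaxReach P h hsurj (h '' B) n t' :=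
            (sum_absP_mul P h s _).symm
        _ ≤ _ := Finset.le_sup' (fun α => ∑ t', absP P h α t' *
            absMaxReach P h hsurj (h '' B) n t') (mem_gammaSet_self h s)

end Saturated

theorem abstraction_sound_unbounded_reach_general {S T : Type*}
    [Fintype S] [Fintype T]
    (P : S → S → ℝ)
    (hP : ∀ s s' : S, 0 ≤ P s s')
    (hsum : ∀ s : S, ∑ s' : S, P s s' = 1)
    (h : S → T) (hsurj : Function.Surjective h)
    (B : Set S) (hsat : B = h ⁻¹' (h '' B)) :
    ∀ s : S,
      (⨆ n : ℕ, absMinReach P h hsurj (h '' B) n (h s)) ≤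
          (⨆ n : ℕ, reachN P B n s) ∧
      (⨆ n : ℕ, reachN P B n s) ≤
          ⨆ n : ℕ, absMaxReach P h hsurj (h '' B) n (h s) := by
  intro s
  have reach_bdd : BddAbove (Set.range fun n => reachN P B n s) :=
    ⟨1, Set.forall_mem_range.mpr fun n => reachN_le_one hP hsum B n s⟩
  have max_bdd : BddAbove (Set.range fun n => absMaxReach P h hsurj (h '' B) n (h s)) :=
    ⟨1, Set.forall_mem_range.mpr fun n => absMaxReach_le_one hP hsum h hsurj _ n _⟩
  exact ⟨ciSup_mono reach_bdd fun n => absMinReach_le_reachN hP hsat n s,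
    ciSup_mono max_bdd fun n => reachN_le_absMaxReach hP hsat n s⟩

/-- Abstraction soundness for unbounded reachability: let (S, P) be a
finite DTMC, h : S → Ŝ a surjective abstraction function, and B ⊆ S an h-saturated
target set with abstract target B̂ = h(B). Then for every concrete state s,
`⨆ₙ minreach n (h s) ≤ Preach s ≤ ⨆ₙ maxreach n (h s)`, where
`Preach s = ⨆ₙ reach n s` is the reachability probability of B in the concrete
DTMC. -/
theorem abstraction_sound_unbounded_reach {S T : Type*}
    [Fintype S] [Nonempty S] [Fintype T]
    (P : S → S → ℝ)
    (hP : ∀ s s' : S, 0 ≤ P s s')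
    (hsum : ∀ s : S, ∑ s' : S, P s s' = 1)
    (h : S → T) (hsurj : Function.Surjective h)
    (B : Set S) (hsat : B = h ⁻¹' (h '' B)) :
    ∀ s : S,
      (⨆ n : ℕ, absMinReach P h hsurj (h '' B) n (h s)) ≤
          (⨆ n : ℕ, reachN P B n s) ∧
      (⨆ n : ℕ, reachN P B n s) ≤
          ⨆ n : ℕ, absMaxReach P h hsurj (h '' B) n (h s) :=
  abstraction_sound_unbounded_reach_general P hP hsum h hsurj B hsat
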